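/- (Proposition 1) Let I be a basic set and k a time instant. For any two prefixes x'_{0:k-1}, x''_{0:k-1} ∈ 𝒳^k with I(x'_{0:k-1}) = I(x''_{0:k-1}) = I, and any suffix signal s : ℕ → 𝒳: the concatenated signal x'_{0:k-1}·s satisfies Φ at time 0 if and only if the concatenated signal x''_{0:k-1}·s satisfies Φ at time 0 (where x·s denotes the signal equal to x on positions 0,…,k−1 and to s shifted to positions k, k+1, …). -/
import Mathlib


namespace STLMon

/-- Three-valued satisfaction status: violated `0`, satisfied `1`, uncertain `?`. -/
inductive SatVal : Type
  | zero : SatVal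
  | one : SatVal
  | unk : SatVal
deriving DecidableEq

/-- Direction to a child in the syntax tree (`left` is also used for only-children). -/
inductive Dir : Type
  | left : Dir
  | right : Dir
deriving DecidableEq

/-- STL fragment (3): `Φ ::= G_{[a,b]} Φ | Φ₁ U'_{[a,b]} Φ₂ | Φ₁ ∧ Φ₂ | x ∈ ℋ`. -/
inductive Frag (X : Type) : Type
  | reg : Set X → Frag X
  | conj : Frag X → Frag X → Frag X
  | glob : ℕ → ℕ → Frag X → Frag X
  | untl : ℕ → ℕ → Frag X → Frag X → Frag X

namespace Frag

variable {X : Type}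

/-- Semantics of the fragment: `fsat Φ x k` means `(x,k) ⊨ Φ`. -/
def fsat : Frag X → (ℕ → X) → ℕ → Prop
  | reg H, x, k => x k ∈ H
  | conj φ ψ, x, k => fsat φ x k ∧ fsat ψ x k
  | glob a b φ, x, k => ∀ k', k + a ≤ k' → k' ≤ k + b → fsat φ x k'
  | untl a b φ ψ, x, k =>
      ∃ k', k + a ≤ k' ∧ k' ≤ k + b ∧ fsat ψ x k' ∧
        ∀ k'', k + a ≤ k'' → k'' ≤ k' → fsat φ x k''

/-- A node of the syntax tree of `Φ` is a path (list of directions) from the root;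
`subAt Φ p` is the subformula `Φ^v` rooted at the node `v` with path `p`, if it exists. -/
def subAt : Frag X → List Dir → Option (Frag X)
  | φ, [] => some φ
  | conj φ _, Dir.left :: p => subAt φ p
  | conj _ ψ, Dir.right :: p => subAt ψ p
  | glob _ _ φ, Dir.left :: p => subAt φ p
  | untl _ _ φ _, Dir.left :: p => subAt φ p
  | untl _ _ _ ψ, Dir.right :: p => subAt ψ p
  | _, _ => none

/-- Left endpoint `int^v` of the evaluation horizon of node `v`:
the sum of `a^{v'}` over all (strict) ancestors `v'` of `v`. -/
def intOf : Frag X → List Dir → ℕ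
  | _, [] => 0
  | conj φ _, Dir.left :: p => intOf φ p
  | conj _ ψ, Dir.right :: p => intOf ψ p
  | glob a _ φ, Dir.left :: p => a + intOf φ p
  | untl a _ φ _, Dir.left :: p => a + intOf φ p
  | untl a _ _ ψ, Dir.right :: p => a + intOf ψ p
  | _, _ => 0

/-- Right endpoint `end^v` of the evaluation horizon of node `v`:
the sum of `b^{v'}` over all (strict) ancestors `v'` of `v`. -/
def endOf : Frag X → List Dir → ℕ
  | _, [] => 0
  | conj φ _, Dir.left :: p => endOf φ p
  | conj _ ψ, Dir.right :: p => endOf ψ p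
  | glob _ b φ, Dir.left :: p => b + endOf φ p
  | untl _ b φ _, Dir.left :: p => b + endOf φ p
  | untl _ b _ ψ, Dir.right :: p => b + endOf ψ p
  | _, _ => 0

/-- `p` is an `ℋ`-node (a predicate leaf) of the syntax tree of `Φ`. -/
def IsHNode (Φ : Frag X) (p : List Dir) : Prop :=
  ∃ H : Set X, subAt Φ p = some (reg H)

/-- The satisfaction region `ℋ^v` attached to the `ℋ`-node at path `p`. -/
def regionAt (Φ : Frag X) (p : List Dir) : Set X :=
  match subAt Φ p with
  | some (reg H) => H
  | _ => ∅

/-- `(p, t)` is a meaningful entry of a basic set: `p` is an `ℋ`-node and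
`t` lies in its evaluation horizon `[int^p, end^p]`. -/
def Relevant (Φ : Frag X) (p : List Dir) (t : ℕ) : Prop :=
  IsHNode Φ p ∧ intOf Φ p ≤ t ∧ t ≤ endOf Φ p

/-- A basic set of satisfaction vectors: one three-valued entry for each `ℋ`-node
and each instant of its evaluation horizon. -/
def BasicSet (Φ : Frag X) : Type := ∀ p t, Relevant Φ p t → SatVal

/-- The entry of a basic set, totalized by `?` outside the relevant positions. -/
noncomputable def val (Φ : Frag X) (I : BasicSet Φ) (p : List Dir) (t : ℕ) : SatVal :=
  @dite _ (Relevant Φ p t) (Classical.dec _) (fun h => I p t h) (fun _ => SatVal.unk)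

open Classical in
/-- Induced satisfaction vectors (Definition 5): `ind β φ p t` is the induced value
`ι^v[t]` of the node `v` at path `p` carrying subformula `φ`, computed bottom-up from
the values `β` of the `ℋ`-node leaves. -/
noncomputable def ind (β : List Dir → ℕ → SatVal) : Frag X → List Dir → ℕ → SatVal
  | reg _, p, t => β p t
  | conj φ ψ, p, t =>
      if ind β φ (p ++ [Dir.left]) t = SatVal.zero ∨
         ind β ψ (p ++ [Dir.right]) t = SatVal.zero then SatVal.zero
      else if ind β φ (p ++ [Dir.left]) t = SatVal.one ∧
              ind β ψ (p ++ [Dir.right]) t = SatVal.one then SatVal.one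
      else SatVal.unk
  | glob a b φ, p, t =>
      if ∃ t', a ≤ t' ∧ t' ≤ b ∧ ind β φ (p ++ [Dir.left]) (t + t') = SatVal.zero then
        SatVal.zero
      else if ∀ t', a ≤ t' → t' ≤ b → ind β φ (p ++ [Dir.left]) (t + t') = SatVal.one then
        SatVal.one
      else SatVal.unk
  | untl a b φ ψ, p, t =>
      if (∀ t', a ≤ t' → t' ≤ b → ind β ψ (p ++ [Dir.right]) (t + t') = SatVal.zero) ∨
         (∀ t', a ≤ t' → t' ≤ b → ind β ψ (p ++ [Dir.right]) (t + t') = SatVal.one →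
            ∃ t'', a ≤ t'' ∧ t'' ≤ t' ∧ ind β φ (p ++ [Dir.left]) (t + t'') = SatVal.zero) then
        SatVal.zero
      else if ∃ t', a ≤ t' ∧ t' ≤ b ∧ ind β ψ (p ++ [Dir.right]) (t + t') = SatVal.one ∧
              ∀ t'', a ≤ t'' → t'' ≤ t' → ind β φ (p ++ [Dir.left]) (t + t'') = SatVal.one then
        SatVal.one
      else SatVal.unk

open Classical in
/-- Online update of a basic set upon observing state `xk` at instant `k`:
in each `ℋ`-node vector whose horizon contains `k`, only the entry at position `k`
is changed, to `1` if `xk ∈ ℋ^{v_i}` and to `0` otherwise. -/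
noncomputable def updateB (Φ : Frag X) (I : BasicSet Φ) (k : ℕ) (xk : X) : BasicSet Φ :=
  fun p t h =>
    if t = k then (if xk ∈ regionAt Φ p then SatVal.one else SatVal.zero) else I p t h

/-- The initial basic set `I₀`: every entry is `?`. -/
def initB (Φ : Frag X) : BasicSet Φ := fun _ _ _ => SatVal.unk

/-- `basicOf Φ x k` is `I(x_{0:k-1})`, obtained from `I₀` by successive updates
with `x 0, …, x (k-1)`. -/
noncomputable def basicOf (Φ : Frag X) (x : ℕ → X) : ℕ → BasicSet Φ
  | 0 => initB Φ
  | k + 1 => updateB Φ (basicOf Φ x k) k (x k)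

/-- Membership in `𝓘_k`: entries are `?` exactly at positions `t ≥ k`. -/
def InFam (Φ : Frag X) (I : BasicSet Φ) (k : ℕ) : Prop :=
  ∀ p t (h : Relevant Φ p t), (I p t h = SatVal.unk ↔ k ≤ t)

/-- The induced root satisfaction value `ι^root_I[0]` of a basic set `I`. -/
noncomputable def rootVal (Φ : Frag X) (I : BasicSet Φ) : SatVal :=
  ind (val Φ I) Φ [] 0

/-- `Is ∈ succ(I, k)`: `I ∈ 𝕀_k`, `Is ∈ 𝕀_{k+1}`, and `Is` agrees with `I`
on every `ℋ`-node entry at positions `t ∈ [int^v, min(k-1, end^v)]`. -/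
def Succ (Φ : Frag X) (k : ℕ) (I Is : BasicSet Φ) : Prop :=
  InFam Φ I k ∧ rootVal Φ I ≠ SatVal.zero ∧
  InFam Φ Is (k + 1) ∧ rootVal Φ Is ≠ SatVal.zero ∧
  ∀ p t (h : Relevant Φ p t), t < k → I p t h = Is p t h

/-- The consistent region `H_k(I, I_s) = ⋂ᵢ H_{i,k}`, where `H_{i,k}` is `ℋ^{v_i}` if
`ι_s^{v_i}[k] = 1`, the complement of `ℋ^{v_i}` if `ι_s^{v_i}[k] = 0`, and `𝒳` if `k`
is outside the horizon of `v_i`. -/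
def consReg (Φ : Frag X) (Is : BasicSet Φ) (k : ℕ) : Set X :=
  {x | ∀ p (h : Relevant Φ p k),
        (Is p k h = SatVal.zero → x ∉ regionAt Φ p) ∧
        (Is p k h = SatVal.one → x ∈ regionAt Φ p)}

end Frag

/-- Trajectory of the control system `x_{k+1} = f(x_k, u_k)`:
`traj f x u n` is the state after `n` steps from `x` under inputs `u`. -/
def traj {X U : Type} (f : X → U → X) (x : X) (u : ℕ → U) : ℕ → X
  | 0 => x
  | n + 1 => f (traj f x u n) (u n)

/-- The signal obtained from the prefix `xpre` on positions `0, …, k-1` followed by the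
state `xk` at position `k` and the trajectory `ξ_f(xk, u)` afterwards. -/
def runFrom {X U : Type} (f : X → U → X) (k : ℕ) (xpre : ℕ → X) (xk : X) (u : ℕ → U) :
    ℕ → X :=
  fun n => if n < k then xpre n else traj f xk u (n - k)

/-- One-step feasible set `Υ(S) = {x | ∃ u ∈ 𝒰, f(x,u) ∈ S}`. -/
def oneStep {X U : Type} (f : X → U → X) (S : Set X) : Set X :=
  {x | ∃ u : U, f x u ∈ S}

/-- The `I`-determined feasible set `X_k^I`: states `xk` from which some control makes the
signal, consisting of some prefix consistent with `I` followed by `xk` and the resulting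
trajectory, satisfy `Φ`. -/
noncomputable def feasSet {X U : Type} (Φ : Frag X) (f : X → U → X) (k : ℕ)
    (I : Frag.BasicSet Φ) : Set X :=
  {xk | ∃ xpre : ℕ → X, Frag.basicOf Φ xpre k = I ∧
          ∃ u : ℕ → U, Frag.fsat Φ (runFrom f k xpre xk u) 0}

end STLMon

open STLMon STLMon.Frag

theorem subAt_append' {X : Type} : ∀ (p : List Dir) (Φ φ : Frag X) (q : List Dir),
    subAt Φ p = some φ → subAt Φ (p ++ q) = subAt φ q
  | [], Φ, φ, q, h => by
      simp [subAt] at h; subst h; rfl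
  | d :: p, Φ, φ, q, h => by
    cases Φ with
    | reg H => simp [subAt] at h
    | conj α β =>
        cases d
        · exact subAt_append' p α φ q h
        · exact subAt_append' p β φ q h
    | glob a b α =>
        cases d
        · exact subAt_append' p α φ q h
        · simp [subAt] at h
    | untl a b α β =>
        cases d
        · exact subAt_append' p α φ q h
        · exact subAt_append' p β φ q h

theorem intOf_append' {X : Type} : ∀ (p : List Dir) (Φ φ : Frag X) (q : List Dir),
    subAt Φ p = some φ → intOf Φ (p ++ q) = intOf Φ p + intOf φ q
  | [], Φ, φ, q, h => by
      simp [subAt] at h; subst h; simp [intOf]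
  | d :: p, Φ, φ, q, h => by
    cases Φ with
    | reg H => simp [subAt] at h
    | conj α β =>
        cases d
        · exact intOf_append' p α φ q h
        · exact intOf_append' p β φ q h
    | glob a b α =>
        cases d
        · simp [intOf, intOf_append' p α φ q h, Nat.add_assoc]
        · simp [subAt] at h
    | untl a b α β =>
        cases d
        · simp [intOf, intOf_append' p α φ q h, Nat.add_assoc]
        · simp [intOf, intOf_append' p β φ q h, Nat.add_assoc]

theorem endOf_append' {X : Type} : ∀ (p : List Dir) (Φ φ : Frag X) (q : List Dir),
    subAt Φ p = some φ → endOf Φ (p ++ q) = endOf Φ p + endOf φ q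
  | [], Φ, φ, q, h => by
      simp [subAt] at h; subst h; simp [endOf]
  | d :: p, Φ, φ, q, h => by
    cases Φ with
    | reg H => simp [subAt] at h
    | conj α β =>
        cases d
        · exact endOf_append' p α φ q h
        · exact endOf_append' p β φ q h
    | glob a b α =>
        cases d
        · simp [endOf, endOf_append' p α φ q h, Nat.add_assoc]
        · simp [subAt] at h
    | untl a b α β =>
        cases d
        · simp [endOf, endOf_append' p α φ q h, Nat.add_assoc]
        · simp [endOf, endOf_append' p β φ q h, Nat.add_assoc]

open Classical in
theorem basicOf_val' {X : Type} (Φ : Frag X) (x : ℕ → X) :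
    ∀ (k : ℕ) (p : List Dir) (t : ℕ) (h : Relevant Φ p t), t < k →
      basicOf Φ x k p t h = if x t ∈ regionAt Φ p then SatVal.one else SatVal.zero
  | 0, p, t, h, ht => absurd ht (Nat.not_lt_zero t)
  | k + 1, p, t, h, ht => by
      by_cases htk : t = k
      · subst htk; simp [basicOf, Frag.updateB]
      · have : t < k := Nat.lt_of_le_of_ne (Nat.lt_succ_iff.mp ht) htk
        simp only [basicOf, Frag.updateB, if_neg htk]
        exact basicOf_val' Φ x k p t h this

theorem fsat_indep_aux {X : Type} (Φtop : Frag X) (k : ℕ) (y' y'' : ℕ → X)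
    (hagree : ∀ t, k ≤ t → y' t = y'' t)
    (hβ : ∀ p t, Relevant Φtop p t → t < k →
        (y' t ∈ regionAt Φtop p ↔ y'' t ∈ regionAt Φtop p)) :
    ∀ (φ : Frag X) (p : List Dir), subAt Φtop p = some φ →
      ∀ t, intOf Φtop p ≤ t → t ≤ endOf Φtop p → (fsat φ y' t ↔ fsat φ y'' t) := by
  intro φ
  induction φ with
  | reg H =>
      intro p hp t h1 h2
      by_cases htk : t < k
      · have hrel : Relevant Φtop p t := ⟨⟨H, hp⟩, h1, h2⟩
        have hreg : regionAt Φtop p = H := by simp [regionAt, hp]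
        have := hβ p t hrel htk
        rw [hreg] at this
        exact this
      · have := hagree t (Nat.le_of_not_lt htk)
        simp [fsat, this]
  | conj α β ihα ihβ =>
      intro p hp t h1 h2
      have hpl : subAt Φtop (p ++ [Dir.left]) = some α := by
        rw [subAt_append' p _ _ _ hp]; simp [subAt]
      have hpr : subAt Φtop (p ++ [Dir.right]) = some β := by
        rw [subAt_append' p _ _ _ hp]; simp [subAt]
      have il : intOf Φtop (p ++ [Dir.left]) = intOf Φtop p := by
        rw [intOf_append' p _ _ _ hp]; simp [intOf]
      have ir : intOf Φtop (p ++ [Dir.right]) = intOf Φtop p := by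
        rw [intOf_append' p _ _ _ hp]; simp [intOf]
      have el : endOf Φtop (p ++ [Dir.left]) = endOf Φtop p := by
        rw [endOf_append' p _ _ _ hp]; simp [endOf]
      have er : endOf Φtop (p ++ [Dir.right]) = endOf Φtop p := by
        rw [endOf_append' p _ _ _ hp]; simp [endOf]
      exact and_congr (ihα _ hpl t (il ▸ h1) (el ▸ h2)) (ihβ _ hpr t (ir ▸ h1) (er ▸ h2))
  | glob a b α ihα =>
      intro p hp t h1 h2
      have hpl : subAt Φtop (p ++ [Dir.left]) = some α := by
        rw [subAt_append' p _ _ _ hp]; simp [subAt]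
      have il : intOf Φtop (p ++ [Dir.left]) = intOf Φtop p + a := by
        rw [intOf_append' p _ _ _ hp]; simp [intOf]
      have el : endOf Φtop (p ++ [Dir.left]) = endOf Φtop p + b := by
        rw [endOf_append' p _ _ _ hp]; simp [endOf]
      constructor <;> intro hs k' hk1 hk2
      · exact (ihα _ hpl k' (il ▸ le_trans (Nat.add_le_add_right h1 a) hk1)
          (el ▸ le_trans hk2 (Nat.add_le_add_right h2 b))).mp (hs k' hk1 hk2)
      · exact (ihα _ hpl k' (il ▸ le_trans (Nat.add_le_add_right h1 a) hk1)
          (el ▸ le_trans hk2 (Nat.add_le_add_right h2 b))).mpr (hs k' hk1 hk2)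
  | untl a b α β ihα ihβ =>
      intro p hp t h1 h2
      have hpl : subAt Φtop (p ++ [Dir.left]) = some α := by
        rw [subAt_append' p _ _ _ hp]; simp [subAt]
      have hpr : subAt Φtop (p ++ [Dir.right]) = some β := by
        rw [subAt_append' p _ _ _ hp]; simp [subAt]
      have il : intOf Φtop (p ++ [Dir.left]) = intOf Φtop p + a := by
        rw [intOf_append' p _ _ _ hp]; simp [intOf]
      have el : endOf Φtop (p ++ [Dir.left]) = endOf Φtop p + b := by
        rw [endOf_append' p _ _ _ hp]; simp [endOf]
      have ir : intOf Φtop (p ++ [Dir.right]) = intOf Φtop p + a := by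
        rw [intOf_append' p _ _ _ hp]; simp [intOf]
      have er : endOf Φtop (p ++ [Dir.right]) = endOf Φtop p + b := by
        rw [endOf_append' p _ _ _ hp]; simp [endOf]
      constructor <;> rintro ⟨k', hk1, hk2, hψ, hφ⟩ <;> refine ⟨k', hk1, hk2, ?_, ?_⟩
      · exact (ihβ _ hpr k' (ir ▸ le_trans (Nat.add_le_add_right h1 a) hk1)
          (er ▸ le_trans hk2 (Nat.add_le_add_right h2 b))).mp hψ
      · intro k'' hk1' hk2'
        exact (ihα _ hpl k'' (il ▸ le_trans (Nat.add_le_add_right h1 a) hk1')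
          (el ▸ le_trans (le_trans hk2' hk2) (Nat.add_le_add_right h2 b))).mp (hφ k'' hk1' hk2')
      · exact (ihβ _ hpr k' (ir ▸ le_trans (Nat.add_le_add_right h1 a) hk1)
          (er ▸ le_trans hk2 (Nat.add_le_add_right h2 b))).mpr hψ
      · intro k'' hk1' hk2'
        exact (ihα _ hpl k'' (il ▸ le_trans (Nat.add_le_add_right h1 a) hk1')
          (el ▸ le_trans (le_trans hk2' hk2) (Nat.add_le_add_right h2 b))).mpr (hφ k'' hk1' hk2')

/-- (Proposition 1) Let `I` be a basic set and `k` a time instant. For any two prefixes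
`x'_{0:k-1}, x''_{0:k-1}` with `I(x'_{0:k-1}) = I(x''_{0:k-1}) = I` and any suffix signal
`s`, the concatenation `x'_{0:k-1}·s` satisfies `Φ` (at time 0) iff `x''_{0:k-1}·s`
does. -/
theorem sat_indep_of_consistent_prefix {X : Type} (Φ : Frag X) (k : ℕ)
    (I : BasicSet Φ) (x' x'' : ℕ → X)
    (h' : basicOf Φ x' k = I) (h'' : basicOf Φ x'' k = I) (s : ℕ → X) :
    fsat Φ (fun n => if n < k then x' n else s (n - k)) 0 ↔
      fsat Φ (fun n => if n < k then x'' n else s (n - k)) 0 := by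
  classical
  set y' : ℕ → X := fun n => if n < k then x' n else s (n - k) with hy'
  set y'' : ℕ → X := fun n => if n < k then x'' n else s (n - k) with hy''
  have hagree : ∀ t, k ≤ t → y' t = y'' t := by
    intro t ht
    simp [hy', hy'', Nat.not_lt_of_le ht]
  have hβ : ∀ p t, Relevant Φ p t → t < k →
      (y' t ∈ regionAt Φ p ↔ y'' t ∈ regionAt Φ p) := by
    intro p t hrel ht
    have e1 := basicOf_val' Φ x' k p t hrel ht
    have e2 := basicOf_val' Φ x'' k p t hrel ht
    rw [h'] at e1; rw [h''] at e2
    have e : (if x' t ∈ regionAt Φ p then SatVal.one else SatVal.zero) =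
        (if x'' t ∈ regionAt Φ p then SatVal.one else SatVal.zero) := e1.symm.trans e2
    have : y' t = x' t := by simp [hy', ht]
    rw [this]
    have : y'' t = x'' t := by simp [hy'', ht]
    rw [this]
    by_cases h1 : x' t ∈ regionAt Φ p <;> by_cases h2 : x'' t ∈ regionAt Φ p <;>
      simp [h1, h2] at e ⊢
  have h0 : subAt Φ ([] : List Dir) = some Φ := by simp [subAt]
  have hi : intOf Φ ([] : List Dir) = 0 := by simp [intOf]
  have he : endOf Φ ([] : List Dir) = 0 := by simp [endOf]
  exact fsat_indep_aux Φ k y' y'' hagree hβ Φ [] h0 0 (le_of_eq hi) (le_of_eq he.symm)
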